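/- arXiv:2411.19188 — 3 statements merged into one kernel-verified Lean document; each statement's English description precedes it below -/
import Mathlib

section
/- Let T be a proper binary tree with saturated vertices u and w such that R_T(u) = R_T(w). Let u_1, w_1 be the respective siblings of u and w, and u_0, w_0 their respective parents, and assume u_0 is an ancestor of w_0. If R_T(w_1) ≥ R_T(u) = R_T(w) and T* is the proper binary tree obtained from T by deleting the edges uu_0 and w_1w_0 and adding the edges uw_0 and w_1u_0 (i.e., exchanging the subtrees T(u) and T(w_1)), then R(T*) ≥ R(T). -/
/-- Proper binary trees: every internal vertex has exactly two children. -/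
inductive BTree : Type
  | leaf : BTree
  | node : BTree → BTree → BTree
  deriving DecidableEq

namespace BTree

/-- The rank (protection number) of the root of a proper binary tree:
the minimum distance from the root to a leaf descendant. -/
def rank : BTree → ℕ
  | leaf => 0
  | node l r => min l.rank r.rank + 1

/-- The security of a proper binary tree: the sum of the ranks of all vertices. -/
def security : BTree → ℕ
  | leaf => 0
  | node l r => (node l r).rank + l.security + r.security

/-- The number of leaves. -/
def leafCount : BTree → ℕ
  | leaf => 1
  | node l r => l.leafCount + r.leafCount

/-- The height: maximum distance from the root to a leaf. -/
def height : BTree → ℕ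
  | leaf => 0
  | node l r => max l.height r.height + 1

/-- A tree is complete if all leaves are at the same depth. -/
def IsComplete : BTree → Prop
  | leaf => True
  | node l r => IsComplete l ∧ IsComplete r ∧ l.height = r.height

/-- The subtree at a given position (a list of directions from the root;
`false` = first child, `true` = second child), if the position exists. -/
def subtreeAt : BTree → List Bool → Option BTree
  | t, [] => some t
  | leaf, _ :: _ => none
  | node l _, false :: p => subtreeAt l p
  | node _ r, true :: p => subtreeAt r p

/-- Replace the subtree at a given position by `s`. -/
def replaceAt : BTree → List Bool → BTree → BTree
  | _, [], s => s
  | leaf, _ :: _, _ => leaf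
  | node l r, false :: p, s => node (replaceAt l p s) r
  | node l r, true :: p, s => node l (replaceAt r p s)

/-- The rank of the vertex at position `p` in `T` (rank of a vertex only depends
on the subtree consisting of the vertex and its descendants). -/
def rankAt (T : BTree) (p : List Bool) : ℕ := ((T.subtreeAt p).map rank).getD 0

/-- The vertex at position `p` in `T` is saturated: its subtree is complete, but the
subtree of none of its (proper) ancestors is complete. -/
def Saturated (T : BTree) (p : List Bool) : Prop :=
  (∃ s, T.subtreeAt p = some s ∧ IsComplete s) ∧
  ∀ q s, q <+: p → q ≠ p → T.subtreeAt q = some s → ¬ IsComplete s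

/-- The complete binary tree of height `m` (with `2 ^ m` leaves). -/
def completeTree : ℕ → BTree
  | 0 => leaf
  | m + 1 => node (completeTree m) (completeTree m)

/-- The tree `T_L` for `L = (n₁, …, n_k)`: a binary caterpillar whose spine vertices carry
complete binary trees with `2 ^ nᵢ` leaves. -/
def TL : List ℕ → BTree
  | [] => leaf
  | n :: ns => ns.foldl (fun acc m => node acc (completeTree m)) (completeTree n)

/-- Helper for the almost complete tree: a complete binary tree of height `m`
whose leftmost `r` leaves each receive two leaf children. -/
def buildF : ℕ → ℕ → BTree
  | 0, r => if r = 0 then leaf else node leaf leaf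
  | m + 1, r => node (buildF m (min r (2 ^ m))) (buildF m (r - 2 ^ m))

/-- The almost complete ("good") tree `F(ℓ)` on `ℓ` leaves. -/
def F (ℓ : ℕ) : BTree := buildF (Nat.log 2 ℓ) (ℓ - 2 ^ Nat.log 2 ℓ)

theorem subtreeAt_append (T : BTree) (p q : List Bool) :
    T.subtreeAt (p ++ q) = (T.subtreeAt p).bind (fun s => s.subtreeAt q) := by
  induction p generalizing T with
  | nil => simp [subtreeAt]
  | cons c p ih =>
    cases T with
    | leaf => simp [subtreeAt]
    | node l r => cases c <;> simp [subtreeAt, ih]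

theorem replaceAt_append (T s x : BTree) (p q : List Bool) (h : T.subtreeAt p = some s) :
    T.replaceAt (p ++ q) x = T.replaceAt p (s.replaceAt q x) := by
  induction p generalizing T with
  | nil => simp [subtreeAt] at h; subst h; simp [replaceAt]
  | cons c p ih =>
    cases T with
    | leaf => simp [subtreeAt] at h
    | node l r => cases c <;> simp [subtreeAt, replaceAt] at h ⊢ <;> exact ih _ h

theorem subtreeAt_replaceAt_self (T s x : BTree) (p : List Bool) (h : T.subtreeAt p = some s) :
    (T.replaceAt p x).subtreeAt p = some x := by
  induction p generalizing T with
  | nil => simp [subtreeAt, replaceAt]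
  | cons c p ih =>
    cases T with
    | leaf => simp [subtreeAt] at h
    | node l r => cases c <;> simp [subtreeAt, replaceAt] at h ⊢ <;> exact ih _ h

theorem replaceAt_replaceAt (T a b : BTree) (p : List Bool) :
    (T.replaceAt p a).replaceAt p b = T.replaceAt p b := by
  induction p generalizing T with
  | nil => simp [replaceAt]
  | cons c p ih =>
    cases T with
    | leaf => simp [replaceAt]
    | node l r => cases c <;> simp [replaceAt, ih]

theorem rank_replaceAt_eq (T s x : BTree) (p : List Bool) (h : T.subtreeAt p = some s)
    (hr : x.rank = s.rank) : (T.replaceAt p x).rank = T.rank := by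
  induction p generalizing T with
  | nil => simp [subtreeAt] at h; subst h; simpa [replaceAt]
  | cons c p ih =>
    cases T with
    | leaf => simp [subtreeAt] at h
    | node l r => cases c <;> simp [subtreeAt, replaceAt, rank] at h ⊢ <;> rw [ih _ h]

theorem security_replaceAt (T s x : BTree) (p : List Bool) (h : T.subtreeAt p = some s)
    (hr : x.rank = s.rank) :
    (T.replaceAt p x).security + s.security = T.security + x.security := by
  induction p generalizing T with
  | nil => simp [subtreeAt] at h; subst h; simp [replaceAt]; omega
  | cons c p ih =>
    cases T with
    | leaf => simp [subtreeAt] at h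
    | node l r =>
      cases c <;> simp [subtreeAt, replaceAt, security, rank] at h ⊢ <;>
        [rw [rank_replaceAt_eq l s x p h hr]; rw [rank_replaceAt_eq r s x p h hr]] <;>
        have := ih _ h <;> omega

theorem security_replaceAt_le (T s x : BTree) (p : List Bool) (h : T.subtreeAt p = some s)
    (hr : s.rank ≤ x.rank) (hs : s.security ≤ x.security) :
    T.rank ≤ (T.replaceAt p x).rank ∧ T.security ≤ (T.replaceAt p x).security := by
  induction p generalizing T with
  | nil => simp [subtreeAt] at h; subst h; simp [replaceAt]; exact ⟨hr, hs⟩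
  | cons c p ih =>
    cases T with
    | leaf => simp [subtreeAt] at h
    | node l r =>
      cases c <;> simp [subtreeAt, replaceAt, security, rank] at h ⊢ <;>
        have := ih _ h <;> omega

theorem wnode_facts (W tw tw1 tu : BTree) (dw : Bool)
    (hW : W.subtreeAt [dw] = some tw) (hW1 : W.subtreeAt [!dw] = some tw1)
    (h1 : tu.rank = tw.rank) (h2 : tu.rank ≤ tw1.rank) :
    (W.replaceAt [!dw] tu).rank = W.rank ∧
    (W.replaceAt [!dw] tu).security + tw1.security = W.security + tu.security := by
  cases W with
  | leaf => simp [subtreeAt] at hW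
  | node l r => cases dw <;> simp_all [subtreeAt, replaceAt, rank, security] <;> omega

theorem key (U tu tu1 tw1 : BTree) (d : Bool) (q : List Bool)
    (hA : U.subtreeAt [d] = some tu) (hB : U.subtreeAt [!d] = some tu1)
    (hrank1 : (tu1.replaceAt q tu).rank = tu1.rank)
    (hsec : (tu1.replaceAt q tu).security + tw1.security = tu1.security + tu.security)
    (hrk : tu.rank ≤ tw1.rank) :
    U.rank ≤ ((U.replaceAt [d] tw1).replaceAt ((!d) :: q) tu).rank ∧
    U.security ≤ ((U.replaceAt [d] tw1).replaceAt ((!d) :: q) tu).security := by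
  cases U with
  | leaf => simp [subtreeAt] at hA
  | node l r => cases d <;> simp_all [subtreeAt, replaceAt, rank, security] <;> omega

end BTree

open BTree in
/-- Switching lemma (Lemma sw2): for saturated vertices `u` (at position `pu0 ++ [du]`,
with parent `u₀` at `pu0` and sibling `u₁`) and `w` (at position `pw0 ++ [dw]`, with parent
`w₀` at `pw0` and sibling `w₁`) of equal rank, where `u₀` is a (proper) ancestor of `w₀`,
if `R_T(w₁) ≥ R_T(u) = R_T(w)` then exchanging the subtrees `T(u)` and `T(w₁)` does not
decrease the security. -/
theorem switching_lemma_two (T tu tw tu1 tw1 : BTree) (pu0 pw0 : List Bool) (du dw : Bool)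
    (hu : T.subtreeAt (pu0 ++ [du]) = some tu)
    (hw : T.subtreeAt (pw0 ++ [dw]) = some tw)
    (hu1 : T.subtreeAt (pu0 ++ [!du]) = some tu1)
    (hw1 : T.subtreeAt (pw0 ++ [!dw]) = some tw1)
    (hsatu : Saturated T (pu0 ++ [du]))
    (hsatw : Saturated T (pw0 ++ [dw]))
    (hrank : tu.rank = tw.rank)
    (hanc : pu0 <+: pw0) (hanc' : pu0 ≠ pw0)
    (hsib : tu.rank ≤ tw1.rank) :
    T.security ≤ ((T.replaceAt (pu0 ++ [du]) tw1).replaceAt (pw0 ++ [!dw]) tu).security := by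
  obtain ⟨t, ht⟩ := hanc
  -- T at pu0 is some node U
  rw [subtreeAt_append] at hu hu1
  rcases hU : T.subtreeAt pu0 with _ | U
  · rw [hU] at hu; simp at hu
  rw [hU] at hu hu1; simp only [Option.bind_some] at hu hu1
  -- tu is complete
  have hcomp : IsComplete tu := by
    obtain ⟨s, hs, hcs⟩ := hsatu.1
    rw [subtreeAt_append, hU] at hs
    simp only [Option.bind_some] at hs
    rw [hu] at hs; cases hs; exact hcs
  -- pw0 = pu0 ++ (!du) :: rest
  rcases t with _ | ⟨c, rest⟩
  · simp at ht; exact absurd ht hanc'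
  have hcdu : c = du ∨ c = !du := by cases c <;> cases du <;> simp
  rcases hcdu with rfl | rfl
  · exfalso
    refine hsatw.2 (pu0 ++ [c]) tu ⟨rest ++ [dw], by rw [← ht]; simp⟩ ?_ ?_ hcomp
    · intro heq
      apply_fun List.length at heq
      rw [← ht] at heq; simp at heq
    · rw [subtreeAt_append, hU]; simpa using hu
  have hpw : pw0 = pu0 ++ (!du) :: rest := ht.symm
  subst hpw
  -- locate W = subtree at pw0 inside tu1
  have hw' : tu1.subtreeAt (rest ++ [dw]) = some tw := by
    rw [show (pu0 ++ (!du) :: rest) ++ [dw] = pu0 ++ ((!du) :: (rest ++ [dw])) by simp,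
      subtreeAt_append, hU, Option.bind_some,
      show ((!du) :: (rest ++ [dw])) = [!du] ++ (rest ++ [dw]) from rfl,
      subtreeAt_append, hu1, Option.bind_some] at hw
    exact hw
  have hw1' : tu1.subtreeAt (rest ++ [!dw]) = some tw1 := by
    rw [show (pu0 ++ (!du) :: rest) ++ [!dw] = pu0 ++ ((!du) :: (rest ++ [!dw])) by simp,
      subtreeAt_append, hU, Option.bind_some,
      show ((!du) :: (rest ++ [!dw])) = [!du] ++ (rest ++ [!dw]) from rfl,
      subtreeAt_append, hu1, Option.bind_some] at hw1
    exact hw1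
  rw [subtreeAt_append] at hw' hw1'
  rcases hW : tu1.subtreeAt rest with _ | W
  · rw [hW] at hw'; simp at hw'
  rw [hW] at hw' hw1'; simp only [Option.bind_some] at hw' hw1'
  -- facts about replacing tw1 by tu inside W
  obtain ⟨hWr, hWs⟩ := wnode_facts W tw tw1 tu dw hw' hw1' hrank hsib
  -- facts about tu1' = tu1.replaceAt (rest ++ [!dw]) tu
  have hrep : tu1.replaceAt (rest ++ [!dw]) tu = tu1.replaceAt rest (W.replaceAt [!dw] tu) :=
    replaceAt_append tu1 W tu rest [!dw] hW
  have hrank1 : (tu1.replaceAt (rest ++ [!dw]) tu).rank = tu1.rank := by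
    rw [hrep]; exact rank_replaceAt_eq tu1 W _ rest hW hWr
  have hsec1 : (tu1.replaceAt (rest ++ [!dw]) tu).security + tw1.security
      = tu1.security + tu.security := by
    have := security_replaceAt tu1 W (W.replaceAt [!dw] tu) rest hW hWr
    rw [hrep]; omega
  -- the key inequality at U
  obtain ⟨hkr, hks⟩ := key U tu tu1 tw1 du (rest ++ [!dw]) hu hu1 hrank1 hsec1 hsib
  -- rewrite the double replacement as a single replacement at pu0
  have e1 : T.replaceAt (pu0 ++ [du]) tw1 = T.replaceAt pu0 (U.replaceAt [du] tw1) :=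
    replaceAt_append T U tw1 pu0 [du] hU
  have e2 : (T.replaceAt pu0 (U.replaceAt [du] tw1)).replaceAt
      ((pu0 ++ (!du) :: rest) ++ [!dw]) tu
      = T.replaceAt pu0 ((U.replaceAt [du] tw1).replaceAt ((!du) :: (rest ++ [!dw])) tu) := by
    rw [show (pu0 ++ (!du) :: rest) ++ [!dw] = pu0 ++ ((!du) :: (rest ++ [!dw])) by simp,
      replaceAt_append _ (U.replaceAt [du] tw1) tu pu0 _
        (subtreeAt_replaceAt_self T U _ pu0 hU),
      replaceAt_replaceAt]
  rw [e1, e2]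
  exact (security_replaceAt_le T U _ pu0 hU hkr hks).2
end

section
/- Let ℓ ≥ 2 have binary power representation ℓ = 2^{n_1} + ⋯ + 2^{n_k} with n_1 > n_2 > ⋯ > n_k ≥ 0 and L = (n_1,…,n_k). Then the security of T_L equals R(T_L) = 2ℓ − n_1 − k − 1. -/
/-!
Each spine vertex `vᵢ` (`i ≥ 2`) has the complete tree of height `nᵢ` as one child and, since
the `nⱼ` decrease, a subtree of rank `> nᵢ` as the other, so its rank is `nᵢ + 1`. A complete
tree of height `m` has security `2 ^ (m + 1) - m - 2`, so attaching it at `vᵢ` adds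
`2 ^ (nᵢ + 1) - 1` to the security; summing over the spine gives `2ℓ - n₁ - k - 1`.
-/

namespace BTree

lemma security_node (l r : BTree) :
    (node l r).security = (node l r).rank + l.security + r.security := rfl

lemma rank_completeTree (m : ℕ) : (completeTree m).rank = m := by
  induction m with
  | zero => rfl
  | succ m ih => simp [completeTree, rank, ih]

lemma security_completeTree_add (m : ℕ) :
    (completeTree m).security + m + 2 = 2 ^ (m + 1) := by
  induction m with
  | zero => rfl
  | succ m ih =>
    rw [completeTree, security_node, ← completeTree, rank_completeTree, pow_succ]
    omega

lemma security_foldl_node_completeTree_add_length (ns : List ℕ) (t : BTree)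
    (h : (t.rank :: ns).IsChain (· > ·)) :
    (ns.foldl (fun a m => node a (completeTree m)) t).security + ns.length
      = t.security + 2 * (ns.map (2 ^ ·)).sum := by
  induction ns generalizing t with
  | nil => simp
  | cons m ns ih =>
    rw [List.isChain_cons_cons] at h
    have hrank : (node t (completeTree m)).rank = m + 1 := by
      rw [rank, rank_completeTree, min_eq_right h.1.le]
    have hchain : ((node t (completeTree m)).rank :: ns).IsChain (· > ·) := by
      rw [hrank]
      refine h.2.imp_head fun hk => ?_
      omega
    have hm := security_completeTree_add m
    rw [pow_succ] at hm
    rw [List.foldl_cons, List.length_cons, ← add_assoc, ih _ hchain, security_node, hrank,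
      List.map_cons, List.sum_cons]
    omega

end BTree

open BTree in
theorem security_TL_general (ℓ n1 : ℕ) (L' : List ℕ)
    (hdec : (n1 :: L').Chain' (· > ·))
    (hsum : ((n1 :: L').map (2 ^ ·)).sum = ℓ) :
    (TL (n1 :: L')).security + n1 + (n1 :: L').length + 1 = 2 * ℓ := by
  have hspine := security_foldl_node_completeTree_add_length L' (completeTree n1)
    (by rwa [rank_completeTree])
  have hroot := security_completeTree_add n1
  rw [pow_succ] at hroot
  rw [List.map_cons, List.sum_cons] at hsum
  rw [TL, List.length_cons]
  omega

open BTree in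
/-- The security of `T_L` for `ℓ ≥ 2` with binary power representation
`L = (n₁, …, n_k)` equals `2ℓ − n₁ − k − 1`. -/
theorem security_TL (ℓ n1 : ℕ) (L' : List ℕ) (hℓ : 2 ≤ ℓ)
    (hdec : (n1 :: L').Chain' (· > ·))
    (hsum : ((n1 :: L').map (2 ^ ·)).sum = ℓ) :
    (TL (n1 :: L')).security + n1 + (n1 :: L').length + 1 = 2 * ℓ :=
  security_TL_general ℓ n1 L' hdec hsum
end

section
/- Among all proper binary trees T with ℓ ≥ 3 leaves, the maximum security equals max R(T) = 2ℓ − ⌊log₂ ℓ⌋ − s₂(ℓ) − 1, where s₂(ℓ) denotes the number of ones in the binary representation of ℓ (equivalently, writing ℓ = 2^{n_1} + ⋯ + 2^{n_k} with n_1 > ⋯ > n_k ≥ 0, the maximum security equals 2ℓ − n_1 − k − 1). -/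
/-! A vertex of rank `k` has at least `2 ^ k` leaves below it, so the root of `node l r`, whose
subtrees have `a` and `b` leaves, has rank at most `min (log₂ a) (log₂ b) + 1`. With this, the
bound `R(T) + ⌊log₂ ℓ⌋ + s₂(ℓ) + 1 ≤ 2ℓ` follows by induction on `T` from the digit-sum inequality
`log₂ (a + b) + s₂ (a + b) ≤ max (log₂ a) (log₂ b) + s₂ a + s₂ b`. By Kummer's theorem,
`s₂ a + s₂ b - s₂ (a + b)` counts the carries in the binary addition `a + b`, and there is a carry
whenever `log₂ (a + b)` exceeds `max (log₂ a) (log₂ b)`. Equality is attained by the almost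
complete tree `F ℓ`. -/

local notation:max "s₂" n:max => List.sum (Nat.digits 2 n)

namespace Nat

theorem digits_two_sum_add_padicValNat_choose (a b : ℕ) :
    s₂ (a + b) + padicValNat 2 ((a + b).choose b) = s₂ a + s₂ b := by
  have hchoose := choose_pos (le_add_left b a)
  have hfac : padicValNat 2 (a + b)! =
      padicValNat 2 ((a + b).choose b) + padicValNat 2 a ! + padicValNat 2 b ! := by
    rw [← add_choose_mul_factorial_mul_factorial,
      padicValNat.mul (mul_pos hchoose (factorial_pos a)).ne' (factorial_ne_zero b),
      padicValNat.mul hchoose.ne' (factorial_ne_zero a)]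
  have legendre (n : ℕ) : padicValNat 2 n ! = n - s₂ n := by
    simpa using sub_one_mul_padicValNat_factorial (p := 2) n
  have := digit_sum_le 2 a
  have := digit_sum_le 2 b
  have := digit_sum_le 2 (a + b)
  rw [legendre, legendre, legendre] at hfac
  omega

theorem one_le_padicValNat_two_choose_of_carry {a b k : ℕ} (hk : k ≠ 0) (ha : a < 2 ^ k)
    (hb : b < 2 ^ k) (hab : 2 ^ k ≤ a + b) : 1 ≤ padicValNat 2 ((a + b).choose b) := by
  have hlog : log 2 (a + b) < k + 1 := by
    rw [log_lt_iff_lt_pow one_lt_two (by omega), pow_succ]; omega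
  rw [padicValNat_choose' hlog, Finset.one_le_card]
  refine ⟨k, Finset.mem_filter.2 ⟨Finset.mem_Ico.2 ⟨by omega, by omega⟩, ?_⟩⟩
  rwa [mod_eq_of_lt ha, mod_eq_of_lt hb, add_comm]

theorem log_two_add_le_max_add_padicValNat_choose (a b : ℕ) :
    log 2 (a + b) ≤ max (log 2 a) (log 2 b) + padicValNat 2 ((a + b).choose b) := by
  set M := max (log 2 a) (log 2 b)
  have ha : a < 2 ^ (M + 1) :=
    (lt_pow_succ_log_self one_lt_two a).trans_le (pow_le_pow_right₀ one_le_two (by omega))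
  have hb : b < 2 ^ (M + 1) :=
    (lt_pow_succ_log_self one_lt_two b).trans_le (pow_le_pow_right₀ one_le_two (by omega))
  rcases lt_or_ge (a + b) (2 ^ (M + 1)) with hsmall | hcarry
  · have := log_lt_of_lt_pow' (by omega) hsmall
    omega
  · have hlog : log 2 (a + b) < M + 2 := by
      rw [log_lt_iff_lt_pow one_lt_two (by omega), pow_succ]; omega
    have := one_le_padicValNat_two_choose_of_carry (by omega) ha hb hcarry
    omega

theorem log_two_add_add_digits_two_sum_le (a b : ℕ) :
    log 2 (a + b) + s₂ (a + b) ≤ max (log 2 a) (log 2 b) + s₂ a + s₂ b := by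
  have := digits_two_sum_add_padicValNat_choose a b
  have := log_two_add_le_max_add_padicValNat_choose a b
  omega

theorem digits_two_sum_two_pow_add {m r : ℕ} (hr : r < 2 ^ m) : s₂ (2 ^ m + r) = s₂ r + 1 := by
  have hlen : (digits 2 r).length ≤ m := (digits_length_le_iff one_lt_two r).2 hr
  have h := digits_append_zeroes_append_digits (k := m - (digits 2 r).length) (n := r)
    one_lt_two one_pos
  rw [Nat.add_sub_cancel' hlen, mul_one] at h
  rw [add_comm, ← h]
  simp

theorem digits_two_sum_two_pow (m : ℕ) : s₂ (2 ^ m) = 1 := by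
  simpa using digits_two_sum_two_pow_add (Nat.two_pow_pos m)

theorem sub_two_pow_log_two_lt (n : ℕ) : n - 2 ^ log 2 n < 2 ^ log 2 n := by
  have := lt_pow_succ_log_self one_lt_two n
  rw [pow_succ] at this
  omega

end Nat

namespace BTree

open Nat

theorem two_pow_rank_le_leafCount (T : BTree) : 2 ^ T.rank ≤ T.leafCount := by
  induction T with
  | leaf => rfl
  | node l r ihl ihr =>
    have hl := (pow_le_pow_right₀ one_le_two (min_le_left l.rank r.rank)).trans ihl
    have hr := (pow_le_pow_right₀ one_le_two (min_le_right l.rank r.rank)).trans ihr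
    rw [rank, leafCount, pow_succ]
    omega

theorem rank_le_log_leafCount (T : BTree) : T.rank ≤ log 2 T.leafCount :=
  le_log_of_pow_le one_lt_two T.two_pow_rank_le_leafCount

theorem security_add_log_add_digits_two_sum_le (T : BTree) :
    T.security + log 2 T.leafCount + s₂ T.leafCount + 1 ≤ 2 * T.leafCount := by
  induction T with
  | leaf => simp [security, leafCount]
  | node l r ihl ihr =>
    have hl := l.rank_le_log_leafCount
    have hr := r.rank_le_log_leafCount
    have := log_two_add_add_digits_two_sum_le l.leafCount r.leafCount
    simp only [security, rank, leafCount]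
    omega

theorem leafCount_buildF {m r : ℕ} (hr : r ≤ 2 ^ m) : (buildF m r).leafCount = 2 ^ m + r := by
  induction m generalizing r with
  | zero => interval_cases r <;> rfl
  | succ m ih =>
    rw [buildF, leafCount, ih (min_le_right _ _), ih (by omega), pow_succ]
    omega

theorem rank_buildF {m r : ℕ} (hr : r ≤ 2 ^ m) :
    (buildF m r).rank = if r = 2 ^ m then m + 1 else m := by
  induction m generalizing r with
  | zero => interval_cases r <;> rfl
  | succ m ih =>
    have := Nat.one_le_two_pow (n := m)
    rw [buildF, rank, ih (min_le_right _ _), ih (by omega), pow_succ]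
    split_ifs <;> omega

theorem security_buildF {m r : ℕ} (hr : r ≤ 2 ^ m) :
    (buildF m r).security + m + s₂ r + 2 = 2 ^ (m + 1) + 2 * r := by
  induction m generalizing r with
  | zero => interval_cases r <;> simp [buildF, security, rank]
  | succ m ih =>
    have hrank := rank_buildF hr
    have hpow : 2 ^ (m + 1) = 2 * 2 ^ m := by ring
    have := Nat.one_le_two_pow (n := m)
    have := digits_two_sum_two_pow m
    rw [buildF] at hrank ⊢
    rw [security, hrank]
    rcases le_or_gt r (2 ^ m) with hle | hgt
    · rw [min_eq_left hle, Nat.sub_eq_zero_of_le hle, if_neg (show r ≠ 2 ^ (m + 1) by omega)]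
      have := ih hle
      have := ih (zero_le (2 ^ m))
      simp only [digits_zero, List.sum_nil] at this
      omega
    · obtain ⟨r', rfl⟩ := exists_add_of_le hgt.le
      rw [min_eq_right hgt.le, Nat.add_sub_cancel_left]
      have := ih (le_refl (2 ^ m))
      have := ih (r := r') (by omega)
      rcases (show r' ≤ 2 ^ m by omega).lt_or_eq with hlt | rfl
      · rw [if_neg (show 2 ^ m + r' ≠ 2 ^ (m + 1) by omega), digits_two_sum_two_pow_add hlt]
        omega
      · rw [if_pos (show 2 ^ m + 2 ^ m = 2 ^ (m + 1) by omega), ← two_mul, ← _root_.pow_succ',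
          digits_two_sum_two_pow]
        omega

theorem leafCount_F {ℓ : ℕ} (hℓ : ℓ ≠ 0) : (F ℓ).leafCount = ℓ := by
  rw [F, leafCount_buildF (sub_two_pow_log_two_lt ℓ).le]
  have := pow_log_le_self 2 hℓ
  omega

theorem security_F {ℓ : ℕ} (hℓ : ℓ ≠ 0) : (F ℓ).security + log 2 ℓ + s₂ ℓ + 1 = 2 * ℓ := by
  have hle := pow_log_le_self 2 hℓ
  have hlt := sub_two_pow_log_two_lt ℓ
  have hs := digits_two_sum_two_pow_add hlt
  have := security_buildF hlt.le
  rw [pow_succ] at this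
  rw [Nat.add_sub_cancel' hle] at hs
  rw [F]
  omega

end BTree

open BTree in
/-- Among proper binary trees with `ℓ ≥ 3` leaves, the maximum security equals
`2ℓ − ⌊log₂ ℓ⌋ − s₂(ℓ) − 1`, where `s₂(ℓ)` is the number of ones in the binary
representation of `ℓ`. -/
theorem max_security (ℓ : ℕ) (hℓ : 3 ≤ ℓ) :
    IsGreatest {R : ℕ | ∃ T : BTree, T.leafCount = ℓ ∧ T.security = R}
      (2 * ℓ - Nat.log 2 ℓ - (Nat.digits 2 ℓ).sum - 1) := by
  have hℓ0 : ℓ ≠ 0 := by omega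
  refine ⟨⟨F ℓ, leafCount_F hℓ0, ?_⟩, ?_⟩
  · have := security_F hℓ0
    omega
  · rintro _ ⟨T, rfl, rfl⟩
    have := T.security_add_log_add_digits_two_sum_le
    omega
end
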